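/- If X and Y are well-filtered T0 spaces, then the product space X × Y is well-filtered. -/

import Mathlib

open Set

/-- The specialization order of the paper: `x ≤ y` iff `x ∈ cl {y}`. -/
def specLE {X : Type*} [TopologicalSpace X] (x y : X) : Prop := x ∈ closure ({y} : Set X)

/-- Upward closure `↑A` w.r.t. the specialization order. -/
def upSet {X : Type*} [TopologicalSpace X] (A : Set X) : Set X := {y | ∃ x ∈ A, specLE x y}

/-- Downward closure `↓A` w.r.t. the specialization order. -/
def downSet {X : Type*} [TopologicalSpace X] (A : Set X) : Set X := {y | ∃ x ∈ A, specLE y x}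

/-- The saturation of a set: the intersection of all open sets containing it. -/
def sat {X : Type*} [TopologicalSpace X] (A : Set X) : Set X := ⋂₀ {U | IsOpen U ∧ A ⊆ U}

/-- A `T0` space is well-filtered if for every filtered family `𝓕` of compact saturated
sets and every open `U` with `⋂₀ 𝓕 ⊆ U`, some member of `𝓕` is contained in `U`. -/
def WellFilteredSpace (X : Type*) [TopologicalSpace X] : Prop :=
  ∀ 𝓕 : Set (Set X), 𝓕.Nonempty →
    (∀ K ∈ 𝓕, IsCompact K ∧ sat K = K) →
    (∀ K₁ ∈ 𝓕, ∀ K₂ ∈ 𝓕, ∃ K₃ ∈ 𝓕, K₃ ⊆ K₁ ∩ K₂) →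
    ∀ U : Set X, IsOpen U → ⋂₀ 𝓕 ⊆ U → ∃ K ∈ 𝓕, K ⊆ U

section aux

variable {Z : Type*} [TopologicalSpace Z]

lemma subset_sat (A : Set Z) : A ⊆ sat A := fun _ hz _ hV => hV.2 hz

lemma sat_subset_open {A U : Set Z} (hU : IsOpen U) (h : A ⊆ U) : sat A ⊆ U :=
  fun _ hz => hz U ⟨hU, h⟩

lemma sat_mono {A B : Set Z} (h : A ⊆ B) : sat A ⊆ sat B :=
  fun _ hz V hV => hz V ⟨hV.1, h.trans hV.2⟩

lemma sat_idem (A : Set Z) : sat (sat A) = sat A := by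
  refine subset_antisymm (fun z hz V hV => ?_) (subset_sat _)
  exact hz V ⟨hV.1, sat_subset_open hV.1 hV.2⟩

lemma mem_sat_iff {A : Set Z} {y : Z} : y ∈ sat A ↔ ∃ a ∈ A, specLE a y := by
  constructor
  · intro hy
    by_contra h
    push_neg at h
    have hA : A ⊆ (closure ({y} : Set Z))ᶜ := fun a ha => h a ha
    exact hy _ ⟨isClosed_closure.isOpen_compl, hA⟩ (subset_closure rfl)
  · rintro ⟨a, ha, hay⟩ V ⟨hVopen, hAV⟩
    obtain ⟨z, hzV, hz⟩ := mem_closure_iff.mp hay V hVopen (hAV ha)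
    rwa [← hz]

lemma sat_compact {A : Set Z} (hA : IsCompact A) : IsCompact (sat A) := by
  refine isCompact_of_finite_subcover fun U hUo hcov => ?_
  obtain ⟨t, ht⟩ := hA.elim_finite_subcover U hUo ((subset_sat A).trans hcov)
  exact ⟨t, sat_subset_open (isOpen_biUnion fun i _ => hUo i) ht⟩

end aux

theorem stmt16 {X Y : Type*} [TopologicalSpace X] [TopologicalSpace Y]
    [T0Space X] [T0Space Y]
    (hX : WellFilteredSpace X) (hY : WellFilteredSpace Y) :
    WellFilteredSpace (X × Y) := by
  intro 𝓕 hFne hcs hfil U hU hsub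
  by_contra hcon
  push_neg at hcon
  set C : Set (X × Y) := Uᶜ with hC
  have hCclosed : IsClosed C := hU.isClosed_compl
  have hmeet : ∀ K ∈ 𝓕, (C ∩ K).Nonempty := by
    intro K hK
    obtain ⟨p, hp, hpU⟩ := not_subset.mp (hcon K hK)
    exact ⟨p, hpU, hp⟩
  set S : Set (Set (X × Y)) := {D | IsClosed D ∧ D ⊆ C ∧ ∀ K ∈ 𝓕, (D ∩ K).Nonempty}
    with hSdef
  have hCS : C ∈ S := ⟨hCclosed, Subset.rfl, hmeet⟩
  have hzorn : ∀ c ⊆ S, IsChain (· ⊆ ·) c → c.Nonempty →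
      ∃ lb ∈ S, ∀ s ∈ c, lb ⊆ s := by
    intro c hcS hchain hcne
    refine ⟨⋂₀ c, ⟨isClosed_sInter fun D hD => (hcS hD).1, ?_, ?_⟩,
      fun s hs => sInter_subset_of_mem hs⟩
    · obtain ⟨D₀, hD₀⟩ := hcne
      exact (sInter_subset_of_mem hD₀).trans (hcS hD₀).2.1
    · intro K hK
      have hKc : IsCompact K := (hcs K hK).1
      have hfin : ∀ u : Finset c, (K ∩ ⋂ i ∈ u, (i : Set (X × Y))).Nonempty := by
        intro u
        rcases u.eq_empty_or_nonempty with rfl | hune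
        · obtain ⟨p, -, hpK⟩ := hmeet K hK
          exact ⟨p, hpK, by simp⟩
        · obtain ⟨D₀, hD₀u, hD₀min⟩ := u.exists_minimal hune
          have hsub' : ∀ D ∈ u, (D₀ : Set (X × Y)) ⊆ (D : Set (X × Y)) := by
            intro D hDu
            rcases eq_or_ne (D : Set (X × Y)) (D₀ : Set (X × Y)) with he | hne
            · exact he.ge
            · rcases hchain D.2 D₀.2 hne with h | h
              · exact hD₀min hDu h
              · exact h
          obtain ⟨p, hpD, hpK⟩ := (hcS D₀.2).2.2 K hK
          exact ⟨p, hpK, mem_iInter₂.mpr fun D hD => hsub' D hD hpD⟩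
      have := hKc.inter_iInter_nonempty (fun D : c => (D : Set (X × Y)))
        (fun D => (hcS D.2).1) hfin
      rw [← sInter_eq_iInter] at this
      exact this.imp fun p hp => ⟨hp.2, hp.1⟩
  obtain ⟨D, hDsubC, hDS, hDmin⟩ := zorn_superset_nonempty S hzorn C hCS
  have hDclosed : IsClosed D := hDS.1
  have hDC : D ⊆ C := hDS.2.1
  have hDK : ∀ K ∈ 𝓕, (D ∩ K).Nonempty := hDS.2.2
  have hmin' : ∀ D' : Set (X × Y), IsClosed D' → D' ⊆ D →
      (∀ K ∈ 𝓕, (D' ∩ K).Nonempty) → D' = D := by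
    intro D' h1 h2 h3
    exact subset_antisymm h2 (hDmin ⟨h1, h2.trans hDC, h3⟩ h2)
  -- the X-side family
  have keyX : ∃ x : X, (∀ K ∈ 𝓕, x ∈ sat (Prod.fst '' (D ∩ K))) ∧
      x ∈ closure (Prod.fst '' D) := by
    set EX : Set (Set X) := (fun K => sat (Prod.fst '' (D ∩ K))) '' 𝓕 with hEX
    have hEXne : EX.Nonempty := hFne.image _
    have hEXcs : ∀ E ∈ EX, IsCompact E ∧ sat E = E := by
      rintro E ⟨K, hK, rfl⟩
      exact ⟨sat_compact ((((hcs K hK).1.inter_left hDclosed)).image continuous_fst),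
        sat_idem _⟩
    have hEXfil : ∀ E₁ ∈ EX, ∀ E₂ ∈ EX, ∃ E₃ ∈ EX, E₃ ⊆ E₁ ∩ E₂ := by
      rintro E₁ ⟨K₁, hK₁, rfl⟩ E₂ ⟨K₂, hK₂, rfl⟩
      obtain ⟨K₃, hK₃, hK₃sub⟩ := hfil K₁ hK₁ K₂ hK₂
      refine ⟨_, mem_image_of_mem _ hK₃, subset_inter ?_ ?_⟩ <;>
        refine sat_mono (image_mono ?_)
      · exact fun p hp => ⟨hp.1, (hK₃sub hp.2).1⟩
      · exact fun p hp => ⟨hp.1, (hK₃sub hp.2).2⟩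
    by_contra h
    push_neg at h
    have hsub' : ⋂₀ EX ⊆ (closure (Prod.fst '' D))ᶜ := by
      intro x hx
      exact h x (fun K hK => hx _ (mem_image_of_mem _ hK))
    obtain ⟨E, hE, hEsub⟩ := hX EX hEXne hEXcs hEXfil _
      isClosed_closure.isOpen_compl hsub'
    obtain ⟨K, hK, rfl⟩ := hE
    obtain ⟨p, hpD, hpK⟩ := hDK K hK
    exact hEsub (subset_sat _ ⟨p, ⟨hpD, hpK⟩, rfl⟩) (subset_closure ⟨p, hpD, rfl⟩)
  have keyY : ∃ y : Y, (∀ K ∈ 𝓕, y ∈ sat (Prod.snd '' (D ∩ K))) ∧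
      y ∈ closure (Prod.snd '' D) := by
    set EY : Set (Set Y) := (fun K => sat (Prod.snd '' (D ∩ K))) '' 𝓕 with hEY
    have hEYne : EY.Nonempty := hFne.image _
    have hEYcs : ∀ E ∈ EY, IsCompact E ∧ sat E = E := by
      rintro E ⟨K, hK, rfl⟩
      exact ⟨sat_compact ((((hcs K hK).1.inter_left hDclosed)).image continuous_snd),
        sat_idem _⟩
    have hEYfil : ∀ E₁ ∈ EY, ∀ E₂ ∈ EY, ∃ E₃ ∈ EY, E₃ ⊆ E₁ ∩ E₂ := by
      rintro E₁ ⟨K₁, hK₁, rfl⟩ E₂ ⟨K₂, hK₂, rfl⟩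
      obtain ⟨K₃, hK₃, hK₃sub⟩ := hfil K₁ hK₁ K₂ hK₂
      refine ⟨_, mem_image_of_mem _ hK₃, subset_inter ?_ ?_⟩ <;>
        refine sat_mono (image_mono ?_)
      · exact fun p hp => ⟨hp.1, (hK₃sub hp.2).1⟩
      · exact fun p hp => ⟨hp.1, (hK₃sub hp.2).2⟩
    by_contra h
    push_neg at h
    have hsub' : ⋂₀ EY ⊆ (closure (Prod.snd '' D))ᶜ := by
      intro y hy
      exact h y (fun K hK => hy _ (mem_image_of_mem _ hK))
    obtain ⟨E, hE, hEsub⟩ := hY EY hEYne hEYcs hEYfil _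
      isClosed_closure.isOpen_compl hsub'
    obtain ⟨K, hK, rfl⟩ := hE
    obtain ⟨p, hpD, hpK⟩ := hDK K hK
    exact hEsub (subset_sat _ ⟨p, ⟨hpD, hpK⟩, rfl⟩) (subset_closure ⟨p, hpD, rfl⟩)
  obtain ⟨x, hxE, hxD1⟩ := keyX
  obtain ⟨y, hyE, hyD2⟩ := keyY
  -- D ⊆ ↓x × Y
  have hDx : D ⊆ closure ({x} : Set X) ×ˢ (univ : Set Y) := by
    have h1 : D ∩ (closure ({x} : Set X) ×ˢ (univ : Set Y)) = D := by
      refine hmin' _ (hDclosed.inter (isClosed_closure.prod isClosed_univ))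
        inter_subset_left ?_
      intro K hK
      obtain ⟨a, ⟨p, hpDK, rfl⟩, hax⟩ := mem_sat_iff.mp (hxE K hK)
      exact ⟨p, ⟨⟨hpDK.1, hax, mem_univ _⟩, hpDK.2⟩⟩
    intro p hp
    rw [← h1] at hp
    exact hp.2
  have hDy : D ⊆ (univ : Set X) ×ˢ closure ({y} : Set Y) := by
    have h1 : D ∩ ((univ : Set X) ×ˢ closure ({y} : Set Y)) = D := by
      refine hmin' _ (hDclosed.inter (isClosed_univ.prod isClosed_closure))
        inter_subset_left ?_
      intro K hK
      obtain ⟨b, ⟨p, hpDK, rfl⟩, hby⟩ := mem_sat_iff.mp (hyE K hK)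
      exact ⟨p, ⟨⟨hpDK.1, mem_univ _, hby⟩, hpDK.2⟩⟩
    intro p hp
    rw [← h1] at hp
    exact hp.2
  -- (x, y) belongs to every K
  have hxyK : ∀ K ∈ 𝓕, (x, y) ∈ K := by
    intro K hK
    obtain ⟨p, hpD, hpK⟩ := hDK K hK
    have hspec : specLE p (x, y) := by
      unfold specLE
      have hsingle : ({(x, y)} : Set (X × Y)) = ({x} : Set X) ×ˢ ({y} : Set Y) := by
        simp [Set.singleton_prod_singleton]
      rw [hsingle, closure_prod_eq]
      exact ⟨(hDx hpD).1, (hDy hpD).2⟩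
    rw [← (hcs K hK).2]
    exact mem_sat_iff.mpr ⟨p, hpK, hspec⟩
  have hxyU : (x, y) ∈ U := hsub (fun K hK => hxyK K hK)
  obtain ⟨V₁, V₂, hV₁, hV₂, hxV₁, hyV₂, hVU⟩ := isOpen_prod_iff.mp hU x y hxyU
  obtain ⟨a, haV1, p, hpD, hpa⟩ := mem_closure_iff.mp hxD1 V₁ hV₁ hxV₁
  obtain ⟨b, hbV2, q, hqD, hqb⟩ := mem_closure_iff.mp hyD2 V₂ hV₂ hyV₂
  -- irreducibility of D: D meets V₁ ×ˢ V₂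
  have hirr : (D ∩ (V₁ ×ˢ V₂)).Nonempty := by
    by_contra hempty
    rw [not_nonempty_iff_eq_empty] at hempty
    by_cases hcase : ∀ K ∈ 𝓕, ((D \ (V₁ ×ˢ (univ : Set Y))) ∩ K).Nonempty
    · have heq := hmin' _ (hDclosed.sdiff (hV₁.prod isOpen_univ)) diff_subset hcase
      have hp' : p ∈ D \ (V₁ ×ˢ (univ : Set Y)) := by rw [heq]; exact hpD
      exact hp'.2 ⟨hpa ▸ haV1, mem_univ _⟩
    · push_neg at hcase
      obtain ⟨K₁, hK₁, hK₁e⟩ := hcase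
      have hDK₁ : D ∩ K₁ ⊆ V₁ ×ˢ (univ : Set Y) := by
        intro z hz
        by_contra hzV
        exact eq_empty_iff_forall_notMem.mp hK₁e z ⟨⟨hz.1, hzV⟩, hz.2⟩
      have hall : ∀ K ∈ 𝓕, ((D \ ((univ : Set X) ×ˢ V₂)) ∩ K).Nonempty := by
        intro K hK
        obtain ⟨K₃, hK₃, hK₃sub⟩ := hfil K hK K₁ hK₁
        obtain ⟨z, hzD, hzK₃⟩ := hDK K₃ hK₃
        have hzV₁ : z ∈ V₁ ×ˢ (univ : Set Y) := hDK₁ ⟨hzD, (hK₃sub hzK₃).2⟩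
        have hzV₂ : z ∉ (univ : Set X) ×ˢ V₂ := by
          intro h
          exact eq_empty_iff_forall_notMem.mp hempty z ⟨hzD, hzV₁.1, h.2⟩
        exact ⟨z, ⟨hzD, hzV₂⟩, (hK₃sub hzK₃).1⟩
      have heq := hmin' _ (hDclosed.sdiff (isOpen_univ.prod hV₂)) diff_subset hall
      have hq' : q ∈ D \ ((univ : Set X) ×ˢ V₂) := by rw [heq]; exact hqD
      exact hq'.2 ⟨mem_univ _, hqb ▸ hbV2⟩
  obtain ⟨z, hzD, hzV⟩ := hirr
  exact (hDC hzD) (hVU hzV)
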